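/- arXiv:1611.06201 — 5 statements merged into one kernel-verified Lean document; each statement's English description precedes it below -/
import Mathlib

section
/- Let P be a finite probability space on an alphabet Ω, let α be a Martin-Löf P-random infinite sequence over Ω, and let a, b be distinct elements of Ω. Let β be the infinite sequence over Ω∖{b} obtained by replacing all occurrences of b by a in α. Then β is Martin-Löf Q-random, where Q is the finite probability space on Ω∖{b} defined by Q(a) = P(a) + P(b) and Q(x) = P(x) for all x ∈ Ω∖{a,b}. -/
open scoped BigOperators

namespace Paper

/-- The measure `λ_P([S])` of the open set generated by a set `S` of strings over `Ω`:
the supremum over `n` of the `P`-weight of all length-`n` strings extending some string in `S`. -/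
noncomputable def cylMeasure {Ω : Type*} [Fintype Ω] (P : Ω → ℝ) (S : Set (List Ω)) : ℝ :=
  ⨆ n : ℕ, ∑ τ : Fin n → Ω,
    Set.indicator {τ : Fin n → Ω | ∃ σ ∈ S, σ <+: List.ofFn τ} (fun τ => ∏ i, P (τ i)) τ

/-- The prefix of length `n` of the infinite sequence `α`. -/
def seqPrefix {Ω : Type*} (α : ℕ → Ω) (n : ℕ) : List Ω := List.ofFn fun i : Fin n => α i

/-- `α` belongs to the open set `[S]` generated by the set of strings `S`. -/
def inOpen {Ω : Type*} (S : Set (List Ω)) (α : ℕ → Ω) : Prop :=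
  ∃ σ ∈ S, seqPrefix α σ.length = σ

/-- `P` is a finite probability space on the alphabet `Ω`. -/
def IsFPS {Ω : Type*} [Fintype Ω] (P : Ω → ℝ) : Prop :=
  (∀ a, 0 ≤ P a) ∧ ∑ a, P a = 1

/-- `C ⊆ ℕ × Ω*` is recursively enumerable (under a canonical encoding of the
finite alphabet `Ω` by an initial segment of `ℕ`). -/
def REset {Ω : Type*} [Fintype Ω] (C : Set (ℕ × List Ω)) : Prop :=
  ∃ e : Ω ≃ Fin (Fintype.card Ω),
    REPred fun p : ℕ × List (Fin (Fintype.card Ω)) => (p.1, p.2.map e.symm) ∈ C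

/-- A Martin-Löf `P`-test. -/
def MLTest {Ω : Type*} [Fintype Ω] (P : Ω → ℝ) (C : Set (ℕ × List Ω)) : Prop :=
  REset C ∧ ∀ n : ℕ, 0 < n → cylMeasure P {σ | (n, σ) ∈ C} < (2 : ℝ)⁻¹ ^ n

/-- `α` is Martin-Löf `P`-random. -/
def MLRandom {Ω : Type*} [Fintype Ω] (P : Ω → ℝ) (α : ℕ → Ω) : Prop :=
  ∀ C : Set (ℕ × List Ω), MLTest P C → ∃ n : ℕ, 0 < n ∧ ¬ inOpen {σ | (n, σ) ∈ C} α

/-! Replacing `b` by `a` is the map `contract hab : Ω → Ω ∖ {b}`, and `Q` is the pushforward of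
`P` along it. For any map `f` of finite alphabets, a Martin-Löf test `C` for `f_* P` pulls back to
the `P`-test `{(n, σ) | (n, f σ) ∈ C}`: composing with the total computable map `f` keeps it r.e.,
and the pulled-back open set has `P`-measure at most the `f_* P`-measure of the original, since the
`P`-weights of the strings lying over `τ'` add up to `∏ i, f_* P (τ' i)`. As `f ∘ α ∈ [C_n]`
forces `α` into the pulled-back set, randomness of `α` passes to `f ∘ α`. -/

section Pushforward

variable {Ω Ω' : Type*} [Fintype Ω] [DecidableEq Ω']

def pushforward (f : Ω → Ω') (P : Ω → ℝ) (y : Ω') : ℝ :=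
  ∑ x with f x = y, P x

theorem IsFPS.pushforward [Fintype Ω'] {P : Ω → ℝ} (hP : IsFPS P) (f : Ω → Ω') :
    IsFPS (pushforward f P) :=
  ⟨fun _ => Finset.sum_nonneg fun x _ => hP.1 x,
    (Finset.sum_fiberwise _ f P).trans hP.2⟩

theorem prod_pushforward (f : Ω → Ω') (P : Ω → ℝ) {m : ℕ} (τ' : Fin m → Ω') :
    ∏ i, pushforward f P (τ' i) = ∑ τ : Fin m → Ω with f ∘ τ = τ', ∏ i, P (τ i) := by
  simp only [pushforward]
  rw [Finset.prod_univ_sum]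
  congr 1
  ext τ
  simp [Fintype.mem_piFinset, funext_iff]

theorem sum_indicator_comp [Fintype Ω'] (f : Ω → Ω') (P : Ω → ℝ) {m : ℕ}
    (A : Set (Fin m → Ω')) :
    ∑ τ : Fin m → Ω, {τ | f ∘ τ ∈ A}.indicator (fun τ => ∏ i, P (τ i)) τ
      = ∑ τ' : Fin m → Ω', A.indicator (fun τ' => ∏ i, pushforward f P (τ' i)) τ' := by
  classical
  rw [← Finset.sum_fiberwise _ (f ∘ ·)]
  refine Finset.sum_congr rfl fun τ' _ => ?_
  rw [Set.indicator_apply, prod_pushforward]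
  split_ifs with hτ'
  · refine Finset.sum_congr rfl fun τ hτ => Set.indicator_of_mem ?_ _
    rwa [Set.mem_ofPred_eq, (Finset.mem_filter.1 hτ).2]
  · refine Finset.sum_eq_zero fun τ hτ => Set.indicator_of_notMem ?_ _
    rwa [Set.mem_ofPred_eq, (Finset.mem_filter.1 hτ).2]

end Pushforward

section CylMeasure

variable {Ω Ω' : Type*} [Fintype Ω]

-- `cylMeasure P S` unfolds to `⨆ n, cylSum P S n`.
noncomputable def cylSum (P : Ω → ℝ) (S : Set (List Ω)) (n : ℕ) : ℝ :=
  ∑ τ : Fin n → Ω,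
    {τ : Fin n → Ω | ∃ σ ∈ S, σ <+: List.ofFn τ}.indicator (fun τ => ∏ i, P (τ i)) τ

theorem cylSum_le_one {P : Ω → ℝ} (hP : IsFPS P) (S : Set (List Ω)) (n : ℕ) :
    cylSum P S n ≤ 1 :=
  calc cylSum P S n ≤ ∑ τ : Fin n → Ω, ∏ i, P (τ i) :=
        Finset.sum_le_sum fun τ _ =>
          Set.indicator_le_self' (fun τ _ => Finset.prod_nonneg fun i _ => hP.1 (τ i)) τ
    _ = (∑ x, P x) ^ n := (Fintype.sum_pow P n).symm
    _ = 1 := by rw [hP.2, one_pow]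

variable [Fintype Ω'] [DecidableEq Ω']

theorem cylSum_preimage_le (f : Ω → Ω') {P : Ω → ℝ} (hP : ∀ x, 0 ≤ P x) (S : Set (List Ω'))
    (n : ℕ) : cylSum P {σ | σ.map f ∈ S} n ≤ cylSum (pushforward f P) S n := by
  have hsub : {τ : Fin n → Ω | ∃ σ ∈ {σ | σ.map f ∈ S}, σ <+: List.ofFn τ}
      ⊆ {τ | f ∘ τ ∈ {τ' | ∃ σ ∈ S, σ <+: List.ofFn τ'}} := by
    rintro τ ⟨σ, hσ, hpre⟩
    exact ⟨σ.map f, hσ, by simpa only [List.map_ofFn] using hpre.map f⟩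
  calc cylSum P {σ | σ.map f ∈ S} n
      ≤ ∑ τ : Fin n → Ω, {τ | f ∘ τ ∈ {τ' | ∃ σ ∈ S, σ <+: List.ofFn τ'}}.indicator
          (fun τ => ∏ i, P (τ i)) τ :=
        Finset.sum_le_sum fun τ _ => Set.indicator_le_indicator_of_subset hsub
          (fun τ => Finset.prod_nonneg fun i _ => hP (τ i)) τ
    _ = cylSum (pushforward f P) S n := sum_indicator_comp f P _

theorem cylMeasure_preimage_le (f : Ω → Ω') {P : Ω → ℝ} (hP : IsFPS P) (S : Set (List Ω')) :
    cylMeasure P {σ | σ.map f ∈ S} ≤ cylMeasure (pushforward f P) S :=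
  ciSup_mono ⟨1, Set.forall_mem_range.2 (cylSum_le_one (hP.pushforward f) S)⟩
    (cylSum_preimage_le f hP.1 S)

end CylMeasure

section Prefix

variable {Ω Ω' : Type*}

theorem seqPrefix_comp (f : Ω → Ω') (α : ℕ → Ω) (n : ℕ) :
    seqPrefix (f ∘ α) n = (seqPrefix α n).map f := by
  simp only [seqPrefix, List.map_ofFn]
  rfl

theorem inOpen.of_comp {S : Set (List Ω')} {f : Ω → Ω'} {α : ℕ → Ω} (h : inOpen S (f ∘ α)) :
    inOpen {σ | σ.map f ∈ S} α := by
  obtain ⟨σ, hσ, hpre⟩ := h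
  exact ⟨seqPrefix α σ.length, by rwa [Set.mem_ofPred_eq, ← seqPrefix_comp, hpre],
    by simp [seqPrefix]⟩

end Prefix

section Randomness

variable {Ω Ω' : Type*} [Fintype Ω] [Fintype Ω']

theorem REset.preimage {C : Set (ℕ × List Ω')} (hC : REset C) (f : Ω → Ω') :
    REset {p : ℕ × List Ω | (p.1, p.2.map f) ∈ C} := by
  obtain ⟨e', hC⟩ := hC
  let e := Fintype.equivFin Ω
  let g : Fin (Fintype.card Ω) → Fin (Fintype.card Ω') := e' ∘ f ∘ e.symm
  have hg : Computable fun p : ℕ × List (Fin (Fintype.card Ω)) => (p.1, p.2.map g) :=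
    have hg₂ : Primrec₂ fun (_ : ℕ × List (Fin (Fintype.card Ω))) i => g i :=
      (Primrec.dom_finite g).comp Primrec.snd
    (Primrec.fst.pair (Primrec.list_map Primrec.snd hg₂)).to_comp
  have hmap (l : List (Fin (Fintype.card Ω))) :
      (l.map g).map e'.symm = (l.map e.symm).map f := by
    simp [g]
  refine ⟨e, Partrec.of_eq (hC.comp hg) fun p => ?_⟩
  dsimp only
  rw [hmap]
  rfl

variable [DecidableEq Ω']

theorem MLTest.preimage {f : Ω → Ω'} {P : Ω → ℝ} (hP : IsFPS P) {C : Set (ℕ × List Ω')}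
    (hC : MLTest (pushforward f P) C) : MLTest P {p | (p.1, p.2.map f) ∈ C} :=
  ⟨hC.1.preimage f, fun n hn =>
    (cylMeasure_preimage_le f hP {σ | (n, σ) ∈ C}).trans_lt (hC.2 n hn)⟩

theorem MLRandom.comp {P : Ω → ℝ} (hP : IsFPS P) {α : ℕ → Ω} (hα : MLRandom P α)
    (f : Ω → Ω') : MLRandom (pushforward f P) (f ∘ α) := by
  intro C hC
  obtain ⟨n, hn, hnot⟩ := hα _ (hC.preimage hP)
  exact ⟨n, hn, fun h => hnot h.of_comp⟩

end Randomness

section Contraction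

variable {Ω : Type*} [DecidableEq Ω] {a b : Ω}

def contract (hab : a ≠ b) (x : Ω) : {x : Ω // x ≠ b} :=
  if h : x = b then ⟨a, hab⟩ else ⟨x, h⟩

theorem contract_eq_iff (hab : a ≠ b) (x : Ω) (y : {x : Ω // x ≠ b}) :
    contract hab x = y ↔ x = y ∨ x = b ∧ (y : Ω) = a := by
  unfold contract
  split_ifs with hx
  · subst hx
    simp [Subtype.ext_iff, eq_comm, y.2.symm]
  · simp [Subtype.ext_iff, hx]

theorem pushforward_contract [Fintype Ω] (hab : a ≠ b) (P : Ω → ℝ) :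
    pushforward (contract hab) P =
      fun y : {x : Ω // x ≠ b} => if (y : Ω) = a then P a + P b else P y := by
  funext y
  simp only [pushforward, contract_eq_iff]
  split_ifs with hy
  · rw [← Finset.sum_pair hab]
    congr 1
    ext x
    simp [hy]
  · rw [← Finset.sum_singleton P (y : Ω)]
    congr 1
    ext x
    simp [hy]

end Contraction

theorem contraction_random_general {Ω : Type*} [Fintype Ω] [DecidableEq Ω]
    (P : Ω → ℝ) (hP : IsFPS P) (α : ℕ → Ω) (hα : MLRandom P α)
    (a b : Ω) (hab : a ≠ b) :
    MLRandom
      (fun x : {x : Ω // x ≠ b} => if (x : Ω) = a then P a + P b else P (x : Ω))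
      (fun n => if h : α n = b then (⟨a, hab⟩ : {x : Ω // x ≠ b}) else ⟨α n, h⟩) := by
  rw [← pushforward_contract hab]
  exact hα.comp hP (contract hab)

/-- If `α` is Martin-Löf `P`-random and `a ≠ b`, then the sequence over
`Ω ∖ {b}` obtained by replacing every occurrence of `b` in `α` by `a` is
Martin-Löf `Q`-random, where `Q a = P a + P b` and `Q x = P x` for `x ≠ a, b`. -/
theorem contraction_random {Ω : Type*} [Fintype Ω] [Nonempty Ω] [DecidableEq Ω]
    (P : Ω → ℝ) (hP : IsFPS P) (α : ℕ → Ω) (hα : MLRandom P α)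
    (a b : Ω) (hab : a ≠ b) :
    MLRandom
      (fun x : {x : Ω // x ≠ b} => if (x : Ω) = a then P a + P b else P (x : Ω))
      (fun n => if h : α n = b then (⟨a, hab⟩ : {x : Ω // x ≠ b}) else ⟨α n, h⟩) :=
  contraction_random_general P hP α hα a b hab

end Paper
end

section
/- Let P and Q be finite probability spaces on an alphabet Ω. If there exists an infinite sequence α over Ω which is both Martin-Löf P-random and Martin-Löf Q-random, then P = Q. -/
/-!
Suppose `P a < u / v < Q a`. By Chebyshev's inequality, the `P`-weight of the strings of length
`N` in which `a` has frequency at least `u / v` is `O(1 / N)`, and so is the `Q`-weight of those in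
which it has frequency at most `u / v`. Along the lengths `c * 4 ^ k` these bounds are summable,
so the strings of these lengths with the wrong frequency form a Martin-Löf `P`-test and a
Martin-Löf `Q`-test. A sequence random for both escapes both tests from some level on, and at a
common length its prefix would have frequency of `a` both `< u / v` and `> u / v`.
-/

open scoped BigOperators

namespace Paper

open Finset

section ProductWeights

variable {Ω : Type*} [Fintype Ω] {P : Ω → ℝ}

theorem sum_prod_eq_one (hP1 : ∑ a, P a = 1) (N : ℕ) :
    ∑ τ : Fin N → Ω, ∏ i, P (τ i) = 1 := by
  rw [← Fintype.sum_pow, hP1, one_pow]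

theorem sum_prod_mul_prod (P : Ω → ℝ) {N : ℕ} (f : Fin N → Ω → ℝ) :
    ∑ τ : Fin N → Ω, (∏ i, P (τ i)) * ∏ i, f i (τ i) = ∏ i, ∑ x, P x * f i x := by
  simp_rw [← prod_mul_distrib]
  exact (Fintype.prod_sum fun i x => P x * f i x).symm

theorem sum_prod_mul_mul (hP1 : ∑ a, P a = 1) (g : Ω → ℝ) {N : ℕ} (i j : Fin N) :
    ∑ τ : Fin N → Ω, (∏ k, P (τ k)) * (g (τ i) * g (τ j))
      = if i = j then ∑ x, P x * g x ^ 2 else (∑ x, P x * g x) ^ 2 := by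
  have hcoord : ∀ τ : Fin N → Ω,
      g (τ i) * g (τ j) = ∏ k, (if k = i then g (τ k) else 1) * (if k = j then g (τ k) else 1) := by
    intro τ
    rw [prod_mul_distrib, prod_ite_eq' univ i, prod_ite_eq' univ j]
    simp
  simp_rw [hcoord]
  rw [sum_prod_mul_prod P fun k x => (if k = i then g x else 1) * (if k = j then g x else 1)]
  split_ifs with hij
  · subst hij
    calc ∏ k, ∑ x, P x * ((if k = i then g x else 1) * (if k = i then g x else 1))
        = ∏ k, if k = i then ∑ x, P x * g x ^ 2 else 1 := by
          refine prod_congr rfl fun k _ => ?_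
          split_ifs <;> simp [sq, hP1]
      _ = ∑ x, P x * g x ^ 2 := by simp
  · calc ∏ k, ∑ x, P x * ((if k = i then g x else 1) * (if k = j then g x else 1))
        = ∏ k, (if k = i then ∑ x, P x * g x else 1) * (if k = j then ∑ x, P x * g x else 1) := by
          refine prod_congr rfl fun k _ => ?_
          by_cases hki : k = i
          · subst hki; simp [hij]
          · by_cases hkj : k = j
            · subst hkj; simp [hki]
            · simp [hki, hkj, hP1]
      _ = (∑ x, P x * g x) ^ 2 := by rw [prod_mul_distrib]; simp [sq]

theorem sum_prod_mul_sum_sq (hP1 : ∑ a, P a = 1) {g : Ω → ℝ} (hg : ∑ x, P x * g x = 0)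
    (N : ℕ) :
    ∑ τ : Fin N → Ω, (∏ i, P (τ i)) * (∑ i, g (τ i)) ^ 2 = N * ∑ x, P x * g x ^ 2 := by
  calc ∑ τ : Fin N → Ω, (∏ i, P (τ i)) * (∑ i, g (τ i)) ^ 2
      = ∑ i, ∑ j, ∑ τ : Fin N → Ω, (∏ k, P (τ k)) * (g (τ i) * g (τ j)) := by
        simp_rw [sq, sum_mul_sum, mul_sum]
        rw [sum_comm]
        exact sum_congr rfl fun _ _ => sum_comm
    _ = N * ∑ x, P x * g x ^ 2 := by simp [sum_prod_mul_mul hP1, hg]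

end ProductWeights

theorem cast_count_ofFn {Ω : Type*} [DecidableEq Ω] (a : Ω) {N : ℕ} (τ : Fin N → Ω) :
    (((List.ofFn τ).count a : ℕ) : ℝ) = ∑ i, if τ i = a then 1 else 0 := by
  induction N with
  | zero => simp
  | succ N ih =>
    rw [List.ofFn_succ, List.count_cons, Fin.sum_univ_succ, add_comm, ← ih]
    by_cases h : τ 0 = a <;> simp [h]

section Chebyshev

variable {Ω : Type*} [Fintype Ω] {P : Ω → ℝ}

theorem sum_indicator_prod_le_of_le_abs_sum (hP : IsFPS P) {g : Ω → ℝ}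
    (hg : ∑ x, P x * g x = 0) {N : ℕ} (hN : 0 < N) {ε : ℝ} (hε : 0 < ε)
    {B : Set (Fin N → Ω)} (hB : ∀ τ ∈ B, ε * N ≤ |∑ i, g (τ i)|) :
    ∑ τ, B.indicator (fun τ => ∏ i, P (τ i)) τ ≤ (∑ x, P x * g x ^ 2) / (ε ^ 2 * N) := by
  have hN' : (0 : ℝ) < N := by exact_mod_cast hN
  have hweight : ∀ τ : Fin N → Ω, 0 ≤ ∏ i, P (τ i) := fun τ => prod_nonneg fun i _ => hP.1 _
  rw [le_div_iff₀ (by positivity), ← mul_le_mul_iff_left₀ hN']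
  calc (∑ τ, B.indicator (fun τ => ∏ i, P (τ i)) τ) * (ε ^ 2 * N) * N
      = ∑ τ, B.indicator (fun τ => ∏ i, P (τ i)) τ * (ε * N) ^ 2 := by
        rw [sum_mul, sum_mul]; exact sum_congr rfl fun _ _ => by ring
    _ ≤ ∑ τ : Fin N → Ω, (∏ i, P (τ i)) * (∑ i, g (τ i)) ^ 2 := by
        refine sum_le_sum fun τ _ => ?_
        by_cases hτ : τ ∈ B
        · rw [Set.indicator_of_mem hτ, ← sq_abs (∑ i, g (τ i))]
          exact mul_le_mul_of_nonneg_left (pow_le_pow_left₀ (by positivity) (hB τ hτ) 2)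
            (hweight τ)
        · rw [Set.indicator_of_notMem hτ, zero_mul]
          exact mul_nonneg (hweight τ) (sq_nonneg _)
    _ = (∑ x, P x * g x ^ 2) * N := by rw [sum_prod_mul_sum_sq hP.2 hg, mul_comm]

theorem sum_indicator_prod_le_of_le_abs_count_sub [DecidableEq Ω] (hP : IsFPS P) (a : Ω)
    {N : ℕ} (hN : 0 < N) {ε : ℝ} (hε : 0 < ε) {B : Set (Fin N → Ω)}
    (hB : ∀ τ ∈ B, ε * N ≤ |((List.ofFn τ).count a : ℝ) - P a * N|) :
    ∑ τ, B.indicator (fun τ => ∏ i, P (τ i)) τ ≤ 1 / (ε ^ 2 * N) := by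
  set g : Ω → ℝ := fun x => (if x = a then 1 else 0) - P a
  have hg : ∑ x, P x * g x = 0 := by simp [g, mul_sub, sum_sub_distrib, ← sum_mul, hP.2]
  have hg2 : ∑ x, P x * g x ^ 2 ≤ 1 := by
    calc ∑ x, P x * g x ^ 2 ≤ ∑ x, P x * 1 := by
          refine sum_le_sum fun x _ => mul_le_mul_of_nonneg_left ?_ (hP.1 x)
          have := hP.1 a
          have : P a ≤ 1 := hP.2 ▸ single_le_sum (fun x _ => hP.1 x) (mem_univ a)
          simp only [g]
          split_ifs <;> nlinarith
      _ = 1 := by simp [hP.2]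
  have hsum : ∀ τ : Fin N → Ω, ∑ i, g (τ i) = (List.ofFn τ).count a - P a * N := by
    intro τ
    simp [g, sum_sub_distrib, cast_count_ofFn, mul_comm]
  refine (sum_indicator_prod_le_of_le_abs_sum hP hg hN hε fun τ hτ => ?_).trans ?_
  · rw [hsum]; exact hB τ hτ
  · exact div_le_div_of_nonneg_right hg2 (by positivity)

end Chebyshev

theorem exists_prefix_ofFn_iff {Ω : Type*} {S : Set (List Ω)} {L : ℕ}
    (hS : ∀ σ ∈ S, σ.length = L) {r : ℕ} (τ : Fin (L + r) → Ω) :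
    (∃ σ ∈ S, σ <+: List.ofFn τ) ↔ List.ofFn (fun i => τ (Fin.castAdd r i)) ∈ S := by
  have htake : List.ofFn (fun i => τ (Fin.castAdd r i)) = (List.ofFn τ).take L := by
    apply List.ext_getElem <;> simp
  rw [htake]
  constructor
  · rintro ⟨σ, hσ, hpre⟩
    have hL := hS σ hσ
    rwa [List.prefix_iff_eq_take.1 hpre, hL] at hσ
  · exact fun h => ⟨_, h, List.take_prefix _ _⟩

section Cylinders

variable {Ω : Type*} [Fintype Ω] {P : Ω → ℝ}

noncomputable def cylMass (P : Ω → ℝ) (S : Set (List Ω)) (M : ℕ) : ℝ :=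
  ∑ τ : Fin M → Ω,
    Set.indicator {τ : Fin M → Ω | ∃ σ ∈ S, σ <+: List.ofFn τ} (fun τ => ∏ i, P (τ i)) τ

theorem cylMass_nonneg (hP0 : ∀ a, 0 ≤ P a) (S : Set (List Ω)) (M : ℕ) :
    0 ≤ cylMass P S M :=
  sum_nonneg fun τ _ => Set.indicator_nonneg (fun τ _ => prod_nonneg fun i _ => hP0 (τ i)) τ

theorem cylMass_le_one (hP : IsFPS P) (S : Set (List Ω)) (M : ℕ) : cylMass P S M ≤ 1 :=
  calc cylMass P S M ≤ ∑ τ : Fin M → Ω, ∏ i, P (τ i) :=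
        sum_le_sum fun τ _ =>
          Set.indicator_le_self' (fun τ _ => prod_nonneg fun i _ => hP.1 (τ i)) τ
    _ = 1 := sum_prod_eq_one hP.2 M

theorem cylMass_le_cylMeasure (hP : IsFPS P) (S : Set (List Ω)) (M : ℕ) :
    cylMass P S M ≤ cylMeasure P S :=
  le_ciSup (f := cylMass P S) ⟨1, Set.forall_mem_range.2 (cylMass_le_one hP S)⟩ M

theorem cylMass_iUnion_le (hP0 : ∀ a, 0 ≤ P a) {S : ℕ → Set (List Ω)}
    (hS : ∀ k, ∀ σ ∈ S k, k ≤ σ.length) (M : ℕ) :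
    cylMass P (⋃ k, S k) M ≤ ∑ k ∈ range (M + 1), cylMass P (S k) M := by
  have hnonneg : ∀ (T : Set (Fin M → Ω)) τ, 0 ≤ T.indicator (fun τ => ∏ i, P (τ i)) τ :=
    fun T => Set.indicator_nonneg fun τ _ => prod_nonneg fun i _ => hP0 (τ i)
  unfold cylMass
  rw [sum_comm]
  refine sum_le_sum fun τ _ => ?_
  by_cases hτ : τ ∈ {τ : Fin M → Ω | ∃ σ ∈ ⋃ k, S k, σ <+: List.ofFn τ}
  · rw [Set.indicator_of_mem hτ]
    obtain ⟨σ, hσ, hpre⟩ := hτ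
    obtain ⟨k, hk⟩ := Set.mem_iUnion.1 hσ
    have hkM : k ≤ M := (hS k σ hk).trans (by simpa using hpre.length_le)
    have hτk : τ ∈ {τ : Fin M → Ω | ∃ σ ∈ S k, σ <+: List.ofFn τ} := ⟨σ, hk, hpre⟩
    rw [← Set.indicator_of_mem hτk (fun τ => ∏ i, P (τ i))]
    exact single_le_sum (f := fun j => Set.indicator {τ : Fin M → Ω | ∃ σ ∈ S j, σ <+: List.ofFn τ}
      (fun τ => ∏ i, P (τ i)) τ) (fun j _ => hnonneg _ τ) (mem_range.2 (Nat.lt_succ_of_le hkM))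
  · rw [Set.indicator_of_notMem hτ]
    exact sum_nonneg fun k _ => hnonneg _ τ

theorem cylMeasure_iUnion_le_tsum (hP : IsFPS P) {S : ℕ → Set (List Ω)}
    (hS : ∀ k, ∀ σ ∈ S k, k ≤ σ.length) {b : ℕ → ℝ} (hb : ∀ k, cylMeasure P (S k) ≤ b k)
    (hsum : Summable b) :
    cylMeasure P (⋃ k, S k) ≤ ∑' k, b k := by
  have hmass : ∀ k M, cylMass P (S k) M ≤ b k :=
    fun k M => (cylMass_le_cylMeasure hP _ M).trans (hb k)
  refine ciSup_le fun M => (cylMass_iUnion_le hP.1 hS M).trans ?_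
  exact (sum_le_sum fun k _ => hmass k M).trans
    (hsum.sum_le_tsum _ fun k _ => (cylMass_nonneg hP.1 _ 0).trans (hmass k 0))

theorem sum_comp_castAdd_mul_prod (hP1 : ∑ a, P a = 1) {m : ℕ} (r : ℕ)
    (g : (Fin m → Ω) → ℝ) :
    ∑ τ : Fin (m + r) → Ω, g (fun i => τ (Fin.castAdd r i)) * ∏ i, P (τ i)
      = ∑ σ : Fin m → Ω, g σ * ∏ i, P (σ i) := by
  rw [← (Fin.appendEquiv m r).sum_comp, Fintype.sum_prod_type]
  refine sum_congr rfl fun σ _ => ?_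
  simp only [Fin.appendEquiv_apply, Fin.prod_univ_add, Fin.append_left, Fin.append_right]
  rw [← mul_sum, ← mul_sum, sum_prod_eq_one hP1, mul_one]

theorem cylMass_add_of_length_eq (hP1 : ∑ a, P a = 1) {S : Set (List Ω)} {L : ℕ}
    (hS : ∀ σ ∈ S, σ.length = L) (r : ℕ) :
    cylMass P S (L + r)
      = ∑ σ : Fin L → Ω, {σ | List.ofFn σ ∈ S}.indicator (fun σ => ∏ i, P (σ i)) σ := by
  have hterm : ∀ τ : Fin (L + r) → Ω,
      Set.indicator {τ | ∃ σ ∈ S, σ <+: List.ofFn τ} (fun τ => ∏ i, P (τ i)) τ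
        = {σ : Fin L → Ω | List.ofFn σ ∈ S}.indicator 1 (fun i => τ (Fin.castAdd r i))
          * ∏ i, P (τ i) := by
    intro τ
    by_cases h : List.ofFn (fun i => τ (Fin.castAdd r i)) ∈ S <;>
      simp [Set.indicator, exists_prefix_ofFn_iff hS, h]
  unfold cylMass
  simp_rw [hterm]
  rw [sum_comp_castAdd_mul_prod hP1]
  refine sum_congr rfl fun σ _ => ?_
  by_cases h : List.ofFn σ ∈ S <;> simp [Set.indicator, h]

theorem cylMass_eq_zero_of_lt {S : Set (List Ω)} {L M : ℕ} (hS : ∀ σ ∈ S, σ.length = L)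
    (hM : M < L) : cylMass P S M = 0 := by
  refine sum_eq_zero fun τ _ => Set.indicator_of_notMem ?_ _
  rintro ⟨σ, hσ, hpre⟩
  have := hpre.length_le
  rw [hS σ hσ, List.length_ofFn] at this
  omega

theorem cylMeasure_le_of_length_eq (hP : IsFPS P) {S : Set (List Ω)} {L : ℕ}
    (hS : ∀ σ ∈ S, σ.length = L) :
    cylMeasure P S
      ≤ ∑ σ : Fin L → Ω, {σ | List.ofFn σ ∈ S}.indicator (fun σ => ∏ i, P (σ i)) σ := by
  refine ciSup_le fun M => show cylMass P S M ≤ _ from ?_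
  rcases lt_or_ge M L with hM | hM
  · rw [cylMass_eq_zero_of_lt hS hM, ← cylMass_add_of_length_eq hP.2 hS 0]
    exact cylMass_nonneg hP.1 S _
  · obtain ⟨r, rfl⟩ := Nat.exists_eq_add_of_le hM
    exact (cylMass_add_of_length_eq hP.2 hS r).le

end Cylinders

section FrequencyTest

variable {Ω : Type*} [Fintype Ω] [DecidableEq Ω]

/-- The lengths `c * 4 ^ (n + k)` are sparse enough for the Chebyshev bounds of the strings of
these lengths to be summable over `k`. -/
def freqTest (a : Ω) (c : ℕ) (R : ℕ → ℕ → Prop) : Set (ℕ × List Ω) :=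
  {x | ∃ k, x.2.length = c * 4 ^ (x.1 + k) ∧ R x.2.length (x.2.count a)}

theorem primrec_list_count {α : Type*} [Primcodable α] [DecidableEq α] (a : α) :
    Primrec fun l : List α => l.count a :=
  (Primrec.list_length.comp
    (Primrec.listFilter (Primrec.eq.comp Primrec.id (Primrec.const a)))).of_eq
      fun _ => List.count_eq_length_filter.symm

theorem lt_mul_four_pow {c : ℕ} (hc : 0 < c) (n k : ℕ) : k < c * 4 ^ (n + k) :=
  calc k < 4 ^ k := Nat.lt_pow_self (by norm_num)
    _ ≤ 4 ^ (n + k) := Nat.pow_le_pow_right (by norm_num) (Nat.le_add_left k n)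
    _ ≤ c * 4 ^ (n + k) := Nat.le_mul_of_pos_left _ hc

theorem reSet_freqTest (a : Ω) {c : ℕ} (hc : 0 < c) {R : ℕ → ℕ → Prop} [DecidableRel R]
    (hR : PrimrecRel R) : REset (freqTest a c R) := by
  set e := Fintype.equivFin Ω
  refine ⟨e, ?_⟩
  have hpow : Primrec₂ ((· ^ ·) : ℕ → ℕ → ℕ) := Primrec₂.unpaired'.1 Nat.Primrec.pow
  have hlen : Primrec₂ fun (_ : ℕ) (p : ℕ × List (Fin (Fintype.card Ω))) => p.2.length :=
    (Primrec.list_length.comp Primrec.snd).comp₂ Primrec₂.right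
  have hlevel : PrimrecRel fun (k : ℕ) (p : ℕ × List (Fin (Fintype.card Ω))) =>
      p.2.length = c * 4 ^ (p.1 + k) ∧ R p.2.length (p.2.count (e a)) := by
    refine PrimrecPred.and ?_ ?_
    · exact Primrec.eq.comp hlen (Primrec.nat_mul.comp (Primrec.const c) (hpow.comp
        (Primrec.const 4) (Primrec.nat_add.comp (Primrec.fst.comp Primrec.snd) Primrec.fst)))
    · exact hR.comp hlen ((primrec_list_count (e a)).comp (Primrec.snd.comp Primrec.snd))
  have hbounded := hlevel.exists_mem_list.comp
    (Primrec.list_range.comp (Primrec.succ.comp (Primrec.list_length.comp Primrec.snd)))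
    Primrec.id
  refine hbounded.computablePred.to_re.of_eq fun p => ?_
  have hcount : (p.2.map e.symm).count a = p.2.count (e a) := by
    simpa using List.count_map_of_injective p.2 e.symm e.symm.injective (e a)
  simp only [List.mem_range, id, freqTest, Set.mem_ofPred_eq, List.length_map, hcount]
  refine ⟨fun ⟨k, _, hk⟩ => ⟨k, hk⟩, fun ⟨k, hk⟩ => ⟨k, ?_, hk⟩⟩
  have := lt_mul_four_pow hc p.1 k
  omega

variable {P : Ω → ℝ}

theorem cylMeasure_freqLevel_le (hP : IsFPS P) (a : Ω) {N : ℕ} (hN : 0 < N) {ε : ℝ}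
    (hε : 0 < ε) {R : ℕ → ℕ → Prop} (hdev : ∀ m, R N m → ε * N ≤ |(m : ℝ) - P a * N|) :
    cylMeasure P {σ | σ.length = N ∧ R σ.length (σ.count a)} ≤ 1 / (ε ^ 2 * N) := by
  refine (cylMeasure_le_of_length_eq hP fun σ hσ => hσ.1).trans
    (sum_indicator_prod_le_of_le_abs_count_sub hP a hN hε fun τ hτ => hdev _ ?_)
  simpa using hτ.2

theorem mlTest_freqTest (hP : IsFPS P) (a : Ω) {ε : ℝ} (hε : 0 < ε) {c : ℕ}
    (hc : 1 ≤ ε ^ 2 * c) {R : ℕ → ℕ → Prop} [DecidableRel R] (hR : PrimrecRel R)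
    (hdev : ∀ N m, R N m → ε * N ≤ |(m : ℝ) - P a * N|) : MLTest P (freqTest a c R) := by
  have hc0 : 0 < c := Nat.pos_of_ne_zero fun h => by norm_num [h] at hc
  refine ⟨reSet_freqTest a hc0 hR, fun n hn => ?_⟩
  set S : ℕ → Set (List Ω) :=
    fun k => {σ | σ.length = c * 4 ^ (n + k) ∧ R σ.length (σ.count a)}
  have hlevels : {σ | (n, σ) ∈ freqTest a c R} = ⋃ k, S k := by
    ext σ
    simp [freqTest, S]
  have hlen : ∀ k, ∀ σ ∈ S k, k ≤ σ.length :=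
    fun k σ hσ => hσ.1 ▸ (lt_mul_four_pow hc0 n k).le
  have hmass : ∀ k, cylMeasure P (S k) ≤ (4 : ℝ)⁻¹ ^ n * (4 : ℝ)⁻¹ ^ k := by
    intro k
    refine (cylMeasure_freqLevel_le hP a (by positivity) hε (hdev _)).trans ?_
    rw [← pow_add, inv_pow, one_div]
    refine inv_anti₀ (by positivity) ?_
    push_cast
    nlinarith [pow_pos (by norm_num : (0 : ℝ) < 4) (n + k)]
  have hgeom : Summable fun k => (4 : ℝ)⁻¹ ^ n * (4 : ℝ)⁻¹ ^ k :=
    (summable_geometric_of_lt_one (by norm_num) (by norm_num)).mul_left _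
  have hhalf : (2 : ℝ)⁻¹ ^ n ≤ 2⁻¹ := pow_le_of_le_one (by norm_num) (by norm_num) hn.ne'
  rw [hlevels]
  calc cylMeasure P (⋃ k, S k) ≤ ∑' k, (4 : ℝ)⁻¹ ^ n * (4 : ℝ)⁻¹ ^ k :=
        cylMeasure_iUnion_le_tsum hP hlen hmass hgeom
    _ = (2 : ℝ)⁻¹ ^ n * (2 : ℝ)⁻¹ ^ n * (4 / 3) := by
        rw [tsum_mul_left, tsum_geometric_of_lt_one (by norm_num) (by norm_num), ← mul_pow]
        norm_num
    _ < (2 : ℝ)⁻¹ ^ n := by nlinarith [pow_pos (by norm_num : (0 : ℝ) < 2⁻¹) n]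

end FrequencyTest

theorem exists_nat_div_btwn {x y : ℝ} (hx : 0 ≤ x) (hxy : x < y) :
    ∃ u v : ℕ, 0 < v ∧ x < u / v ∧ (u : ℝ) / v < y := by
  obtain ⟨t, hxt, hty⟩ := exists_rat_btwn hxy
  have ht : 0 ≤ t := by exact_mod_cast hx.trans hxt.le
  have hcast : ((t.num.toNat : ℕ) : ℝ) / t.den = t := by
    rw [Rat.cast_def, ← Int.cast_natCast, Int.toNat_of_nonneg (Rat.num_nonneg.2 ht)]
  exact ⟨t.num.toNat, t.den, t.den_pos, hcast ▸ hxt, hcast ▸ hty⟩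

theorem not_mlRandom_and_of_lt {Ω : Type*} [Fintype Ω] {P Q : Ω → ℝ} (hP : IsFPS P)
    (hQ : IsFPS Q) {a : Ω} (hlt : P a < Q a) (α : ℕ → Ω) :
    ¬ (MLRandom P α ∧ MLRandom Q α) := by
  classical
  rintro ⟨hαP, hαQ⟩
  obtain ⟨u, v, hv, hPt, htQ⟩ := exists_nat_div_btwn (hP.1 a) hlt
  have hv' : (0 : ℝ) < v := by exact_mod_cast hv
  set ε := min ((u : ℝ) / v - P a) (Q a - u / v)
  have hε : 0 < ε := lt_min (sub_pos.2 hPt) (sub_pos.2 htQ)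
  set c := ⌈1 / ε ^ 2⌉₊
  have hc : 1 ≤ ε ^ 2 * c := by
    rw [← div_le_iff₀' (by positivity)]
    exact Nat.le_ceil _
  have hmul : ∀ w : ℕ, Primrec₂ fun (N _ : ℕ) => w * N :=
    fun w => (Primrec.nat_mul.comp (Primrec.const w) Primrec.fst).to₂
  have testP : MLTest P (freqTest a c fun N m => u * N ≤ v * m) := by
    refine mlTest_freqTest hP a hε hc (Primrec.nat_le.comp₂ (hmul u)
      (Primrec.nat_mul.comp (Primrec.const v) Primrec.snd).to₂) fun N m h => ?_
    have hfreq : (u : ℝ) / v * N ≤ m := by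
      rw [div_mul_eq_mul_div, div_le_iff₀ hv']
      exact_mod_cast (show u * N ≤ m * v by linarith)
    calc ε * N ≤ ((u : ℝ) / v - P a) * N := by gcongr; exact min_le_left _ _
      _ ≤ m - P a * N := by linarith
      _ ≤ |(m : ℝ) - P a * N| := le_abs_self _
  have testQ : MLTest Q (freqTest a c fun N m => v * m ≤ u * N) := by
    refine mlTest_freqTest hQ a hε hc (Primrec.nat_le.comp₂
      (Primrec.nat_mul.comp (Primrec.const v) Primrec.snd).to₂ (hmul u)) fun N m h => ?_
    have hfreq : (m : ℝ) ≤ u / v * N := by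
      rw [div_mul_eq_mul_div, le_div_iff₀ hv']
      exact_mod_cast (show m * v ≤ u * N by linarith)
    calc ε * N ≤ (Q a - u / v) * N := by gcongr; exact min_le_right _ _
      _ ≤ Q a * N - m := by linarith
      _ ≤ |(m : ℝ) - Q a * N| := abs_sub_comm (m : ℝ) _ ▸ le_abs_self _
  -- at a length common to both tests, the frequency of `a` in `α` is both above and below `u / v`
  obtain ⟨n₁, -, h₁⟩ := hαP _ testP
  obtain ⟨n₂, -, h₂⟩ := hαQ _ testQ
  set σ := seqPrefix α (c * 4 ^ (n₁ + n₂))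
  have hσ : σ.length = c * 4 ^ (n₁ + n₂) := List.length_ofFn
  have hprefix : seqPrefix α σ.length = σ := by rw [hσ]
  have hbelow : ¬ u * σ.length ≤ v * σ.count a := fun h => h₁ ⟨σ, ⟨n₂, hσ, h⟩, hprefix⟩
  have habove : ¬ v * σ.count a ≤ u * σ.length :=
    fun h => h₂ ⟨σ, ⟨n₁, by rw [hσ, add_comm], h⟩, hprefix⟩
  omega

theorem uniqueness_of_probability_general {Ω : Type*} [Fintype Ω]
    (P Q : Ω → ℝ) (hP : IsFPS P) (hQ : IsFPS Q)
    (h : ∃ α : ℕ → Ω, MLRandom P α ∧ MLRandom Q α) :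
    P = Q := by
  obtain ⟨α, hα⟩ := h
  funext a
  by_contra hne
  rcases lt_or_gt_of_ne hne with hlt | hlt
  · exact not_mlRandom_and_of_lt hP hQ hlt α hα
  · exact not_mlRandom_and_of_lt hQ hP hlt α hα.symm

/-- If some infinite sequence over `Ω` is both Martin-Löf `P`-random and
Martin-Löf `Q`-random, then `P = Q`. -/
theorem uniqueness_of_probability {Ω : Type*} [Fintype Ω] [Nonempty Ω]
    (P Q : Ω → ℝ) (hP : IsFPS P) (hQ : IsFPS Q)
    (h : ∃ α : ℕ → Ω, MLRandom P α ∧ MLRandom Q α) :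
    P = Q :=
  uniqueness_of_probability_general P Q hP hQ h

end Paper
end

section
/- (Closure under computable shuffling.) Let P be a finite probability space on an alphabet Ω, and let α be a Martin-Löf P-random infinite sequence over Ω. Then, for every injective function f : ℕ⁺ → ℕ⁺, if f is computable then the infinite sequence α_f defined by α_f(n) = α(f(n)) for all n ∈ ℕ⁺ is Martin-Löf P-random. -/
open scoped BigOperators

/-!
Pull a `P`-test `C` back along the shuffle: `shuffleTest f C` has at level `n` the strings whose
letters at positions `f 0, f 1, …` begin with a string of `C_n`, so it generates the preimage of
`[C_n]` under `α ↦ α ∘ f`. That preimage has no larger `λ_P`-measure: at depth `m` only the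
positions `i < K` matter, where `K ≤ m` is the first index with `m ≤ f K`; `i ↦ f i` on them
extends to a permutation of `Fin m`, and permuting coordinates preserves the product weight. It is
r.e. uniformly in `n` because `f` is computable. Hence if `α ∘ f` failed the test `C`, then `α`
would fail the test `shuffleTest f C`.
-/

section Computability

open Encodable Nat.Partrec

variable {α β : Type*} [Primcodable α] [Primcodable β]

theorem REPred.exists_bool {g : α → β → Bool} (hg : Computable₂ g) :
    REPred fun a => ∃ b, g a b = true := by
  have hdec : Computable fun x : α × ℕ => (decode (α := β) x.2).elim false (g x.1) :=
    Computable.option_casesOn (Computable.decode.comp Computable.snd) (Computable.const false)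
      (hg.comp (Computable.fst.comp Computable.fst) Computable.snd).to₂ |>.of_eq
      fun x => by cases decode (α := β) x.2 <;> rfl
  refine (Partrec.rfind (hdec.partrec.comp (Computable.fst.pair Computable.snd)).to₂).dom_re.of_eq
    fun a => ?_
  constructor
  · rintro ⟨n, hn, -⟩
    have hgn : (decode (α := β) n).elim false (g a) = true := (Part.mem_some_iff.1 hn).symm
    cases hb : decode (α := β) n with
    | none => simp [hb] at hgn
    | some b => exact ⟨b, by simpa [hb] using hgn⟩
  · rintro ⟨b, hb⟩
    exact ⟨encode b, Part.mem_some_iff.2 (by simp [hb]), fun {_} _ => trivial⟩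

/-- Kleene normal form: `g a k` says that a program for `p` halts on input `a` within `k` steps. -/
theorem REPred.exists_computable₂_bool {p : α → Prop} (hp : REPred p) :
    ∃ g : α → ℕ → Bool, Computable₂ g ∧ ∀ a, p a ↔ ∃ k, g a k = true := by
  obtain ⟨c, hc⟩ := Code.exists_code.1 hp
  refine ⟨fun a k => (Code.evaln k c (encode a)).isSome,
    Primrec.option_isSome.to_comp.comp (Code.primrec_evaln.to_comp.comp
      ((Computable.snd.pair (Computable.const c)).pair (Computable.encode.comp Computable.fst))),
    fun a => ?_⟩
  have hdom : p a ↔ (Code.eval c (encode a)).Dom := by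
    rw [hc]; simp [Part.assert]
  simp only [hdom, Part.dom_iff_mem, Code.evaln_complete, Option.isSome_iff_exists]
  exact ⟨fun ⟨x, k, hk⟩ => ⟨k, x, hk⟩, fun ⟨k, x, hk⟩ => ⟨x, k, hk⟩⟩

theorem REPred.exists {q : α × β → Prop} (hq : REPred q) : REPred fun a => ∃ b, q (a, b) := by
  obtain ⟨g, hg, hgq⟩ := hq.exists_computable₂_bool
  refine (REPred.exists_bool (β := β × ℕ) (g := fun a bk => g (a, bk.1) bk.2)
    (hg.comp (Computable.fst.pair (Computable.fst.comp Computable.snd))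
      (Computable.snd.comp Computable.snd)).to₂).of_eq fun a => ?_
  simp only [hgq, Prod.exists]

theorem REPred.and_computablePred {p r : α → Prop} (hp : REPred p) (hr : ComputablePred r) :
    REPred fun a => p a ∧ r a := by
  obtain ⟨g, hg, hgp⟩ := hp.exists_computable₂_bool
  obtain ⟨d, hd, rfl⟩ := ComputablePred.computable_iff.1 hr
  refine (REPred.exists_bool (g := fun a k => g a k && d a)
    (Primrec.and.to_comp.comp₂ hg (hd.comp Computable.fst).to₂)).of_eq fun a => ?_
  simp [hgp]

theorem REPred.comp {p : β → Prop} (hp : REPred p) {g : α → β} (hg : Computable g) :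
    REPred fun a => p (g a) :=
  Partrec.comp hp hg

theorem ComputablePred.forall_lt {R : α → ℕ → Prop} {n : α → ℕ} (hn : Computable n)
    (hR : ComputablePred fun x : α × ℕ => R x.1 x.2) :
    ComputablePred fun a => ∀ i < n a, R a i := by
  obtain ⟨d, hd, hdR⟩ := ComputablePred.computable_iff.1 hR
  have hrec : ∀ a k, (Nat.rec true (fun i b => b && d (a, i)) k : Bool) = true ↔
      ∀ i < k, R a i := by
    intro a k
    induction k with
    | zero => simp
    | succ k ih =>
      rw [Nat.forall_lt_succ_right, ← ih, Bool.and_eq_true]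
      exact and_congr_right' (iff_of_eq (congrFun hdR (a, k))).symm
  refine ComputablePred.computable_iff.2 ⟨_, Computable.nat_rec hn (Computable.const true)
    (Primrec.and.to_comp.comp (Computable.snd.comp Computable.snd)
      (hd.comp (Computable.fst.pair (Computable.fst.comp Computable.snd)))).to₂, ?_⟩
  funext a
  exact propext (hrec a (n a)).symm

theorem computablePred_forall_getElem?_eq {γ : Type*} [Primcodable γ] [DecidableEq γ]
    {f : ℕ → ℕ} (hf : Computable f) {ρ σ : α → List γ} (hρ : Computable ρ)
    (hσ : Computable σ) : ComputablePred fun x => ∀ i < (σ x).length, (ρ x)[f i]? = (σ x)[i]? := by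
  refine ComputablePred.forall_lt (Computable.list_length.comp hσ) ?_
  refine ComputablePred.computable_iff.2 ⟨_, Primrec.eq.decide.to_comp.comp
    (Computable.list_getElem?.comp (hρ.comp Computable.fst) (hf.comp Computable.snd))
    (Computable.list_getElem?.comp (hσ.comp Computable.fst) Computable.snd), ?_⟩
  funext x
  simp

theorem REPred.exists_forall_getElem?_eq {γ : Type*} [Primcodable γ] [DecidableEq γ]
    {q : α × List γ → Prop} (hq : REPred q) {f : ℕ → ℕ} (hf : Computable f) :
    REPred fun p : α × List γ => ∃ σ, q (p.1, σ) ∧ ∀ i < σ.length, p.2[f i]? = σ[i]? :=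
  have hqσ := hq.comp ((Computable.fst.comp Computable.fst).pair Computable.snd)
  REPred.exists <| hqσ.and_computablePred
    (computablePred_forall_getElem?_eq hf (Computable.snd.comp Computable.fst) Computable.snd)

end Computability

theorem Function.Injective.exists_first_apply_ge {f : ℕ → ℕ} (hf : Function.Injective f) (m : ℕ) :
    ∃ K ≤ m, (∀ i < K, f i < m) ∧ m ≤ f K := by
  classical
  have hex : ∃ k, m ≤ f k := (hf.nat_tendsto_atTop.eventually_ge_atTop m).exists
  refine ⟨Nat.find hex, ?_, fun i hi => not_le.1 (Nat.find_min hex hi), Nat.find_spec hex⟩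
  by_contra! hmK
  have hcard := Finset.card_le_card_of_injOn (s := Finset.range (m + 1)) (t := Finset.range m) f
    (fun i hi => Finset.mem_coe.2 (Finset.mem_range.2 (not_le.1 (Nat.find_min hex
      (lt_of_lt_of_le (Finset.mem_range.1 hi) hmK)))))
    hf.injOn
  simp at hcard

theorem Function.Injective.exists_perm_fin_val_eq {f : ℕ → ℕ} (hf : Function.Injective f) {K m : ℕ}
    (hfm : ∀ i < K, f i < m) :
    ∃ π : Equiv.Perm (Fin m), ∀ i : Fin m, (i : ℕ) < K → (π i : ℕ) = f i := by
  obtain ⟨g, hg⟩ := Set.MapsTo.exists_equiv_extend_of_card_eq (t := Finset.range m)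
    (s := {i : Fin m | (i : ℕ) < K}) (f := fun i => f i) (by simp)
    (fun i hi => Finset.mem_coe.2 (Finset.mem_range.2 (hfm i hi)))
    (fun i _ j _ hij => Fin.ext (hf hij))
  refine ⟨g.trans ((Equiv.subtypeEquivRight fun _ => Finset.mem_range).trans
    Fin.equivSubtype.symm), fun i hi => ?_⟩
  simpa using hg i hi

namespace Paper

section Shuffle

variable {Ω : Type*}

def preimageShuffle (f : ℕ → ℕ) (S : Set (List Ω)) : Set (List Ω) :=
  {ρ | ∃ σ ∈ S, ∀ i < σ.length, ρ[f i]? = σ[i]?}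

theorem isPrefix_ofFn_comp_perm {f : ℕ → ℕ} {σ ρ : List Ω} {m : ℕ} {τ : Fin m → Ω}
    {π : Equiv.Perm (Fin m)} (hσm : σ.length ≤ m)
    (hπ : ∀ i : Fin m, (i : ℕ) < σ.length → (π i : ℕ) = f i)
    (hmatch : ∀ i < σ.length, ρ[f i]? = σ[i]?) (hρ : ρ <+: List.ofFn τ) :
    σ <+: List.ofFn (τ ∘ π) := by
  refine List.prefix_iff_getElem?.2 fun i hi => ?_
  have him : i < m := hi.trans_le hσm
  have hρi : ρ[f i]? = some σ[i] := (hmatch i hi).trans (List.getElem?_eq_getElem hi)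
  obtain ⟨hfi, -⟩ := List.getElem?_eq_some_iff.1 hρi
  have hτ : (List.ofFn τ)[f i]? = some σ[i] := by
    rw [List.prefix_iff_getElem?.1 hρ (f i) hfi, ← List.getElem?_eq_getElem hfi, hρi]
  rw [← hπ ⟨i, him⟩ hi] at hτ
  simpa [List.getElem?_ofFn, him] using hτ

theorem inOpen_preimageShuffle {S : Set (List Ω)} {α : ℕ → Ω} {f : ℕ → ℕ}
    (h : inOpen S fun n => α (f n)) : inOpen (preimageShuffle f S) α := by
  obtain ⟨σ, hσ, hασ⟩ := h
  obtain ⟨L, hL⟩ : ∃ L, ∀ i < σ.length, f i < L :=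
    ⟨(Finset.range σ.length).sup f + 1,
      fun i hi => Nat.lt_succ_of_le (Finset.le_sup (Finset.mem_range.2 hi))⟩
  refine ⟨seqPrefix α L, ⟨σ, hσ, fun i hi => ?_⟩, by simp [seqPrefix]⟩
  rw [← hασ]
  simp [seqPrefix, hL i hi, hi]

theorem map_mem_preimageShuffle_iff {β : Type*} {g : β ≃ Ω} {f : ℕ → ℕ} {S : Set (List Ω)}
    {ρ : List β} :
    ρ.map g ∈ preimageShuffle f S ↔
      ∃ σ : List β, σ.map g ∈ S ∧ ∀ i < σ.length, ρ[f i]? = σ[i]? := by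
  constructor
  · rintro ⟨σ, hσ, hm⟩
    refine ⟨σ.map g.symm, by simpa [List.map_map] using hσ, fun i hi => ?_⟩
    apply Option.map_injective g.injective
    simpa [List.getElem?_map] using hm i (by simpa using hi)
  · rintro ⟨σ, hσ, hm⟩
    exact ⟨σ.map g, hσ, fun i hi => by simp [List.getElem?_map, hm i (by simpa using hi)]⟩

def shuffleTest (f : ℕ → ℕ) (C : Set (ℕ × List Ω)) : Set (ℕ × List Ω) :=
  {p | p.2 ∈ preimageShuffle f {σ | (p.1, σ) ∈ C}}

theorem REset.shuffle [Fintype Ω] {C : Set (ℕ × List Ω)} (hC : REset C) {f : ℕ → ℕ}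
    (hf : Computable f) : REset (shuffleTest f C) := by
  obtain ⟨e, hCe⟩ := hC
  refine ⟨e, (REPred.exists_forall_getElem?_eq hCe hf).of_eq fun p => ?_⟩
  exact (map_mem_preimageShuffle_iff (f := f) (S := {σ | (p.1, σ) ∈ C}) (ρ := p.2)).symm

variable [Fintype Ω]

noncomputable def cylWeight (P : Ω → ℝ) (S : Set (List Ω)) (m : ℕ) : ℝ :=
  ∑ τ : Fin m → Ω,
    Set.indicator {τ : Fin m → Ω | ∃ σ ∈ S, σ <+: List.ofFn τ} (fun τ => ∏ i, P (τ i)) τ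

theorem cylWeight_le_one {P : Ω → ℝ} (hP : IsFPS P) (S : Set (List Ω)) (m : ℕ) :
    cylWeight P S m ≤ 1 :=
  calc cylWeight P S m ≤ ∑ τ : Fin m → Ω, ∏ i, P (τ i) :=
        Finset.sum_le_sum fun τ _ =>
          Set.indicator_le_self' (fun τ _ => Finset.prod_nonneg fun i _ => hP.1 _) τ
    _ = 1 := by rw [← Fintype.piFinset_univ, ← Finset.prod_univ_sum, hP.2, Finset.prod_const_one]

theorem cylWeight_le_cylMeasure {P : Ω → ℝ} (hP : IsFPS P) (S : Set (List Ω)) (m : ℕ) :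
    cylWeight P S m ≤ cylMeasure P S :=
  le_ciSup (f := cylWeight P S) ⟨1, Set.forall_mem_range.2 (cylWeight_le_one hP S)⟩ m

theorem sum_indicator_comp_perm {ι : Type*} [Fintype ι] [DecidableEq ι] (P : Ω → ℝ)
    (A : Set (ι → Ω)) (π : Equiv.Perm ι) :
    ∑ τ : ι → Ω, ((· ∘ π) ⁻¹' A).indicator (fun τ => ∏ i, P (τ i)) τ =
      ∑ τ : ι → Ω, A.indicator (fun τ => ∏ i, P (τ i)) τ := by
  refine Fintype.sum_equiv (π.symm.arrowCongr (Equiv.refl Ω)) _ _ fun τ => ?_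
  have hw : ∏ i, P (τ (π i)) = ∏ i, P (τ i) := Equiv.prod_comp π (fun i => P (τ i))
  change _ = A.indicator _ (τ ∘ π)
  by_cases h : τ ∘ π ∈ A
  · rw [Set.indicator_of_mem (show τ ∈ (· ∘ π) ⁻¹' A from h), Set.indicator_of_mem h]
    exact hw.symm
  · rw [Set.indicator_of_notMem (show τ ∉ (· ∘ π) ⁻¹' A from h), Set.indicator_of_notMem h]

theorem cylMeasure_preimageShuffle_le {P : Ω → ℝ} (hP : IsFPS P) {f : ℕ → ℕ}
    (hf : Function.Injective f) (S : Set (List Ω)) :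
    cylMeasure P (preimageShuffle f S) ≤ cylMeasure P S := by
  refine ciSup_le fun m => (?_ : cylWeight P _ m ≤ _)
  obtain ⟨K, hKm, hfK, hKf⟩ := hf.exists_first_apply_ge m
  obtain ⟨π, hπ⟩ := hf.exists_perm_fin_val_eq hfK
  have hsub : {τ : Fin m → Ω | ∃ ρ ∈ preimageShuffle f S, ρ <+: List.ofFn τ} ⊆
      (· ∘ π) ⁻¹' {τ | ∃ σ ∈ S, σ <+: List.ofFn τ} := by
    rintro τ ⟨ρ, ⟨σ, hσ, hmatch⟩, hρ⟩
    have hσK : σ.length ≤ K := by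
      by_contra! hKσ
      have hfρ := (List.getElem?_eq_some_iff.1 ((hmatch K hKσ).trans
        (List.getElem?_eq_getElem hKσ))).1
      have hρm : ρ.length ≤ m := by simpa using hρ.length_le
      omega
    exact ⟨σ, hσ, isPrefix_ofFn_comp_perm (hσK.trans hKm) (fun i hi => hπ i (hi.trans_le hσK))
      hmatch hρ⟩
  calc cylWeight P (preimageShuffle f S) m
      ≤ ∑ τ : Fin m → Ω, ((· ∘ π) ⁻¹' {τ : Fin m → Ω | ∃ σ ∈ S, σ <+: List.ofFn τ}).indicator
          (fun τ => ∏ i, P (τ i)) τ :=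
        Finset.sum_le_sum fun τ _ => Set.indicator_le_indicator_of_subset hsub
          (fun τ => Finset.prod_nonneg fun i _ => hP.1 _) τ
    _ = cylWeight P S m := sum_indicator_comp_perm P _ π
    _ ≤ cylMeasure P S := cylWeight_le_cylMeasure hP S m

theorem MLTest.shuffle {P : Ω → ℝ} (hP : IsFPS P) {C : Set (ℕ × List Ω)}
    (hC : MLTest P C) {f : ℕ → ℕ} (hinj : Function.Injective f) (hcomp : Computable f) :
    MLTest P (shuffleTest f C) :=
  ⟨hC.1.shuffle hcomp, fun n hn =>
    (cylMeasure_preimageShuffle_le hP hinj {σ | (n, σ) ∈ C}).trans_lt (hC.2 n hn)⟩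

end Shuffle

theorem closure_under_computable_shuffling_general {Ω : Type*} [Fintype Ω]
    (P : Ω → ℝ) (hP : IsFPS P) (α : ℕ → Ω) (hα : MLRandom P α)
    (f : ℕ → ℕ) (hinj : Function.Injective f) (hcomp : Computable f) :
    MLRandom P (fun n => α (f n)) := by
  intro C hC
  obtain ⟨n, hn, hαn⟩ := hα _ (hC.shuffle hP hinj hcomp)
  exact ⟨n, hn, fun hshuffled => hαn (inOpen_preimageShuffle hshuffled)⟩

/-- closure under computable shuffling. If `α` is Martin-Löf `P`-random
and `f` is an injective computable function on positions, then the shuffled sequence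
`n ↦ α (f n)` is Martin-Löf `P`-random. -/
theorem closure_under_computable_shuffling {Ω : Type*} [Fintype Ω] [Nonempty Ω]
    (P : Ω → ℝ) (hP : IsFPS P) (α : ℕ → Ω) (hα : MLRandom P α)
    (f : ℕ → ℕ) (hinj : Function.Injective f) (hcomp : Computable f) :
    MLRandom P (fun n => α (f n)) :=
  closure_under_computable_shuffling_general P hP α hα f hinj hcomp

end Paper
end

section
/- (Closure under selection by a partial computable selection function.) Let P be a finite probability space on an alphabet Ω, let α be a Martin-Löf P-random infinite sequence over Ω, and let f : Ω* → {YES, NO} be a partial computable function. Suppose that f(α↾k) is defined for all k ∈ ℕ, and that the set {k ∈ ℕ : f(α↾k) = YES} is infinite. For each k ∈ ℕ⁺ let s_f(α,k) be the k-th number ℓ ∈ ℕ (in increasing order) such that f(α↾ℓ) = YES. Then the infinite sequence β defined by β(k) = α(s_f(α,k)+1) for all k ∈ ℕ⁺ is Martin-Löf P-random. -/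
open scoped BigOperators

namespace Paper

/-!
A Martin-Löf test `C` for the selected sequence `β` pulls back along the selection to a test for
`α`: its `n`-th level consists of the strings `ρ` on whose prefixes `f` is defined and whose
selected part lies in `C_n`. It is r.e. because the selection is partial computable, and its
measure is at most that of `C_n` because a selection rule that only looks at the past cannot bias
the selected symbols: the strings whose selected part extends `σ` have weight at most `P(σ)`.
Since `β ∈ [C_n]` forces `α` into the `n`-th level of the pulled back test, randomness of `α`
passes to `β`.
-/

section LevelMass

variable {Ω : Type*} {P : Ω → ℝ}

def weight (P : Ω → ℝ) (σ : List Ω) : ℝ := (σ.map P).prod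

@[simp] lemma weight_nil : weight P [] = 1 := rfl

@[simp] lemma weight_cons (a : Ω) (σ : List Ω) : weight P (a :: σ) = P a * weight P σ := by
  simp [weight]

lemma weight_nonneg (hP : ∀ a, 0 ≤ P a) (σ : List Ω) : 0 ≤ weight P σ :=
  List.prod_nonneg fun _ hx => by
    obtain ⟨a, -, rfl⟩ := List.mem_map.1 hx
    exact hP a

lemma weight_ofFn {m : ℕ} (τ : Fin m → Ω) : weight P (List.ofFn τ) = ∏ i, P (τ i) := by
  simp [weight, List.map_ofFn, List.prod_ofFn]

variable [Fintype Ω]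

noncomputable def levelMass (P : Ω → ℝ) (m : ℕ) (A : Set (List Ω)) : ℝ :=
  ∑ τ : Fin m → Ω, A.indicator (weight P) (List.ofFn τ)

def extensions (S : Set (List Ω)) : Set (List Ω) := {l | ∃ σ ∈ S, σ <+: l}

lemma cylMeasure_eq_iSup_levelMass (P : Ω → ℝ) (S : Set (List Ω)) :
    cylMeasure P S = ⨆ m, levelMass P m (extensions S) := by
  unfold cylMeasure levelMass
  congr! with m τ
  classical
  rw [Set.indicator_apply, Set.indicator_apply, weight_ofFn]
  rfl

lemma sum_ofFn_succ {M : Type*} [AddCommMonoid M] (g : List Ω → M) (m : ℕ) :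
    ∑ τ : Fin (m + 1) → Ω, g (List.ofFn τ) = ∑ b : Ω, ∑ τ : Fin m → Ω, g (b :: List.ofFn τ) := by
  rw [← Fintype.sum_prod_type (f := fun q : Ω × (Fin m → Ω) => g (q.1 :: List.ofFn q.2))]
  refine Fintype.sum_equiv (Fin.consEquiv fun _ => Ω).symm _ _ fun τ => ?_
  simp only [Fin.consEquiv_symm_apply, List.ofFn_succ]
  rfl

@[simp] lemma levelMass_zero (A : Set (List Ω)) : levelMass P 0 A = A.indicator (weight P) [] := by
  simp [levelMass]

lemma levelMass_succ (m : ℕ) (A : Set (List Ω)) :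
    levelMass P (m + 1) A = ∑ b, P b * levelMass P m {l | b :: l ∈ A} := by
  rw [levelMass, sum_ofFn_succ]
  refine Finset.sum_congr rfl fun b _ => ?_
  rw [levelMass, Finset.mul_sum]
  refine Finset.sum_congr rfl fun τ _ => ?_
  by_cases h : b :: List.ofFn τ ∈ A <;> simp [h]

@[simp] lemma levelMass_empty (m : ℕ) : levelMass P m ∅ = 0 := by
  simp [levelMass]

lemma levelMass_univ (hP : IsFPS P) (m : ℕ) : levelMass P m Set.univ = 1 := by
  induction m with
  | zero => simp
  | succ m ih => simp [levelMass_succ, ih, hP.2]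

lemma levelMass_mono (hP : ∀ a, 0 ≤ P a) {m : ℕ} {A B : Set (List Ω)}
    (h : ∀ l, l.length = m → l ∈ A → l ∈ B) : levelMass P m A ≤ levelMass P m B := by
  refine Finset.sum_le_sum fun τ _ => ?_
  by_cases hA : List.ofFn τ ∈ A
  · simp [Set.indicator_of_mem hA, Set.indicator_of_mem (h _ (List.length_ofFn) hA)]
  · simpa [Set.indicator_of_notMem hA] using Set.indicator_nonneg (fun l _ => weight_nonneg hP l) _

lemma levelMass_le_one (hP : IsFPS P) (m : ℕ) (A : Set (List Ω)) : levelMass P m A ≤ 1 :=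
  (levelMass_univ hP m) ▸ levelMass_mono hP.1 fun _ _ _ => trivial

lemma levelMass_prefix (hP : IsFPS P) {m : ℕ} {σ : List Ω} (hσ : σ.length ≤ m) :
    levelMass P m {l | σ <+: l} = weight P σ := by
  induction m generalizing σ with
  | zero => simp_all
  | succ m ih =>
    cases σ with
    | nil => simpa using levelMass_univ hP (m + 1)
    | cons a σ =>
      rw [levelMass_succ, Finset.sum_eq_single a]
      · simp [List.cons_prefix_cons, ih (Nat.le_of_succ_le_succ hσ)]
      · intro b _ hb
        simp [List.cons_prefix_cons, Ne.symm hb]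
      · simp

lemma levelMass_biUnion_le (hP : ∀ a, 0 ≤ P a) {ι : Type*} (F : Finset ι) (m : ℕ)
    (A : ι → Set (List Ω)) :
    levelMass P m (⋃ i ∈ F, A i) ≤ ∑ i ∈ F, levelMass P m (A i) := by
  simp only [levelMass]
  rw [Finset.sum_comm]
  refine Finset.sum_le_sum fun τ _ => ?_
  by_cases h : List.ofFn τ ∈ ⋃ i ∈ F, A i
  · obtain ⟨i, hi, hτ⟩ := Set.mem_iUnion₂.1 h
    rw [Set.indicator_of_mem h, ← Set.indicator_of_mem hτ (weight P)]
    exact Finset.single_le_sum (f := fun i => (A i).indicator (weight P) (List.ofFn τ))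
      (fun i _ => Set.indicator_nonneg (fun l _ => weight_nonneg hP l) _) hi
  · rw [Set.indicator_of_notMem h]
    exact Finset.sum_nonneg fun i _ => Set.indicator_nonneg (fun l _ => weight_nonneg hP l) _

lemma levelMass_biUnion {ι : Type*} (F : Finset ι) (m : ℕ) {A : ι → Set (List Ω)}
    (hA : (F : Set ι).PairwiseDisjoint A) :
    levelMass P m (⋃ i ∈ F, A i) = ∑ i ∈ F, levelMass P m (A i) := by
  simp only [levelMass, Finset.indicator_biUnion_apply F A hA]
  exact Finset.sum_comm

lemma levelMass_le_cylMeasure (hP : IsFPS P) (m : ℕ) (S : Set (List Ω)) :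
    levelMass P m (extensions S) ≤ cylMeasure P S := by
  rw [cylMeasure_eq_iSup_levelMass]
  refine le_ciSup (f := fun m => levelMass P m (extensions S)) ⟨1, ?_⟩ m
  rintro _ ⟨k, rfl⟩
  exact levelMass_le_one hP k _

end LevelMass

section Selection

variable {Ω : Type*} {f : List Ω →. Bool}

/-- The string selected from `ρ` by `f` after the history `h`: `ρ[k]` is selected iff
`f (h ++ ρ.take k) = true`, and the result is undefined as soon as one of these values is. -/
def select (f : List Ω →. Bool) : List Ω → List Ω → Part (List Ω)
  | _, [] => Part.some []
  | h, b :: ρ => (f h).bind fun c => (select f (h ++ [b]) ρ).map fun s => cond c (b :: s) s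

@[simp] lemma select_nil (h : List Ω) : select f h [] = Part.some [] := rfl

lemma mem_select_cons {h s : List Ω} {b : Ω} {ρ : List Ω} :
    s ∈ select f h (b :: ρ) ↔ ∃ c ∈ f h, ∃ s' ∈ select f (h ++ [b]) ρ, cond c (b :: s') s' = s := by
  simp [select, Part.mem_bind_iff, Part.mem_map_iff]

lemma select_singleton (h : List Ω) (b : Ω) :
    select f h [b] = (f h).map fun c => cond c [b] [] := by
  simp [select, Part.bind_some_eq_map]

lemma length_le_of_mem_select {h s ρ : List Ω} (hs : s ∈ select f h ρ) :
    s.length ≤ ρ.length := by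
  induction ρ generalizing h s with
  | nil => simp_all
  | cons b ρ ih =>
    obtain ⟨c, -, s', hs', rfl⟩ := mem_select_cons.1 hs
    cases c <;> simp [Nat.le_succ_of_le (ih hs'), ih hs']

lemma select_append (h σ τ : List Ω) :
    select f h (σ ++ τ) = (select f h σ).bind fun s => (select f (h ++ σ) τ).map (s ++ ·) := by
  induction σ generalizing h with
  | nil => simp [Part.map_id']
  | cons b σ ih =>
    simp only [List.cons_append, select, ih, Part.bind_assoc, Part.bind_map, Part.map_bind,
      Part.map_map, List.append_assoc]
    congr! 3 with c
    cases c <;> rfl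

lemma select_map {Γ : Type*} (g : Γ → Ω) (h ρ : List Γ) :
    (select (fun σ => f (σ.map g)) h ρ).map (List.map g) = select f (h.map g) (ρ.map g) := by
  induction ρ generalizing h with
  | nil => rfl
  | cons b ρ ih =>
    have hcomm : ∀ c : Bool, (List.map g ∘ fun s => cond c (b :: s) s) =
        (fun s => cond c (g b :: s) s) ∘ List.map g := by
      intro c
      cases c <;> rfl
    simp only [select, List.map_cons, Part.map_bind, Part.map_map, hcomm]
    simp only [← Part.map_map, ih, List.map_append, List.map_singleton]

def SelectsExtension (f : List Ω →. Bool) (h σ l : List Ω) : Prop :=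
  ∃ ρ, ρ <+: l ∧ ∃ s ∈ select f h ρ, σ <+: s

lemma not_selectsExtension_cons_nil (h σ : List Ω) (a : Ω) :
    ¬ SelectsExtension f h (a :: σ) [] := by
  rintro ⟨ρ, hρ, s, hs, hσs⟩
  rw [List.prefix_nil.1 hρ, select_nil, Part.mem_some_iff] at hs
  simp [hs] at hσs

lemma selectsExtension_cons_cons {h σ l : List Ω} {a b : Ω} :
    SelectsExtension f h (a :: σ) (b :: l) ↔
      (true ∈ f h ∧ b = a ∧ SelectsExtension f (h ++ [b]) σ l) ∨
        (false ∈ f h ∧ SelectsExtension f (h ++ [b]) (a :: σ) l) := by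
  constructor
  · rintro ⟨_ | ⟨b', ρ⟩, hρ, s, hs, hσs⟩
    · simp_all
    obtain ⟨rfl, hρl⟩ := List.cons_prefix_cons.1 hρ
    obtain ⟨c, hc, s', hs', rfl⟩ := mem_select_cons.1 hs
    cases c
    · exact Or.inr ⟨hc, ρ, hρl, s', hs', hσs⟩
    · obtain ⟨rfl, hσs'⟩ := List.cons_prefix_cons.1 hσs
      exact Or.inl ⟨hc, rfl, ρ, hρl, s', hs', hσs'⟩
  · rintro (⟨hc, rfl, ρ, hρ, s, hs, hσs⟩ | ⟨hc, ρ, hρ, s, hs, hσs⟩)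
    · exact ⟨b :: ρ, List.cons_prefix_cons.2 ⟨rfl, hρ⟩, b :: s,
        mem_select_cons.2 ⟨true, hc, s, hs, rfl⟩, List.cons_prefix_cons.2 ⟨rfl, hσs⟩⟩
    · exact ⟨b :: ρ, List.cons_prefix_cons.2 ⟨rfl, hρ⟩, s,
        mem_select_cons.2 ⟨false, hc, s, hs, rfl⟩, hσs⟩

def selectPreimage (f : List Ω →. Bool) (S : Set (List Ω)) : Set (List Ω) :=
  {ρ | ∃ s ∈ select f [] ρ, s ∈ S}

lemma exists_prefix_minimal_mem {S : Set (List Ω)} {s : List Ω} (hs : s ∈ S) :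
    ∃ σ ∈ S, σ <+: s ∧ ∀ τ ∈ S, τ <+: σ → τ = σ := by
  obtain ⟨σ, ⟨hσS, hσs⟩, hmin⟩ :=
    (measure List.length).wf.has_min {σ | σ ∈ S ∧ σ <+: s} ⟨s, hs, List.prefix_rfl⟩
  refine ⟨σ, hσS, hσs, fun τ hτS hτσ => hτσ.eq_of_length ?_⟩
  exact le_antisymm hτσ.length_le (not_lt.1 (hmin τ ⟨hτS, hτσ.trans hσs⟩))

end Selection

section SelectionMeasure

variable {Ω : Type*} [Fintype Ω] {P : Ω → ℝ}

/-- At each position the rule either skips the next symbol, which averages the bound over that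
symbol, or selects it, which pays the factor `P a`. -/
lemma levelMass_selectsExtension_le (hP : IsFPS P) (f : List Ω →. Bool) (m : ℕ) (h σ : List Ω) :
    levelMass P m {l | SelectsExtension f h σ l} ≤ weight P σ := by
  induction m generalizing h σ with
  | zero =>
    cases σ with
    | nil => simpa using levelMass_le_one hP 0 _
    | cons a σ =>
      rw [levelMass_zero, Set.indicator_of_notMem (s := {l | SelectsExtension f h (a :: σ) l})
        (not_selectsExtension_cons_nil h σ a)]
      exact weight_nonneg hP.1 (a :: σ)
  | succ m ih =>
    cases σ with
    | nil => simpa using levelMass_le_one hP (m + 1) _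
    | cons a σ =>
      simp only [levelMass_succ, Set.mem_ofPred_eq, selectsExtension_cons_cons]
      rcases Part.eq_none_or_eq_some (f h) with hfh | ⟨_ | _, hfh⟩
      · simpa [hfh] using weight_nonneg hP.1 (a :: σ)
      · simp only [hfh, Part.mem_some_iff, Bool.true_eq_false, false_and, true_and, false_or]
        calc ∑ b, P b * levelMass P m {l | SelectsExtension f (h ++ [b]) (a :: σ) l}
            ≤ ∑ b, P b * weight P (a :: σ) :=
              Finset.sum_le_sum fun b _ => mul_le_mul_of_nonneg_left (ih _ _) (hP.1 b)
          _ = weight P (a :: σ) := by rw [← Finset.sum_mul, hP.2, one_mul]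
      · rw [Finset.sum_eq_single a (fun b _ hb => by simp [hfh, hb]) (by simp)]
        simpa [hfh] using mul_le_mul_of_nonneg_left (ih (h ++ [a]) σ) (hP.1 a)

/-- Cover the level-`m` strings of `[selectPreimage f S]` by the events "the selected part extends
`σ`", for the prefix-minimal `σ ∈ S` of length at most `m`; these `σ` generate disjoint
cylinders inside `[S]`. -/
lemma levelMass_selectPreimage_le (hP : IsFPS P) (f : List Ω →. Bool) (S : Set (List Ω))
    (m : ℕ) : levelMass P m (extensions (selectPreimage f S)) ≤ levelMass P m (extensions S) := by
  have hfin : {σ | σ ∈ S ∧ σ.length ≤ m ∧ ∀ τ ∈ S, τ <+: σ → τ = σ}.Finite :=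
    (List.finite_length_le Ω m).subset fun σ hσ => hσ.2.1
  set F := hfin.toFinset
  have hdisj : (F : Set (List Ω)).PairwiseDisjoint fun σ => {l | σ <+: l} := by
    intro σ hσ τ hτ hne
    rw [Finset.mem_coe, Set.Finite.mem_toFinset] at hσ hτ
    refine Set.disjoint_left.2 fun l hσl hτl => hne ?_
    rcases List.prefix_or_prefix_of_prefix hσl hτl with h | h
    · exact hτ.2.2 σ hσ.1 h
    · exact (hσ.2.2 τ hτ.1 h).symm
  calc levelMass P m (extensions (selectPreimage f S))
      ≤ levelMass P m (⋃ σ ∈ F, {l | SelectsExtension f [] σ l}) := by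
        refine levelMass_mono hP.1 fun l hl ⟨ρ, ⟨s, hs, hsS⟩, hρl⟩ => ?_
        obtain ⟨σ, hσS, hσs, hmin⟩ := exists_prefix_minimal_mem hsS
        have hσm : σ.length ≤ m := hl ▸ hσs.length_le.trans
          ((length_le_of_mem_select hs).trans hρl.length_le)
        exact Set.mem_biUnion (hfin.mem_toFinset.2 ⟨hσS, hσm, hmin⟩) ⟨ρ, hρl, s, hs, hσs⟩
    _ ≤ ∑ σ ∈ F, levelMass P m {l | SelectsExtension f [] σ l} :=
        levelMass_biUnion_le hP.1 F m _
    _ ≤ ∑ σ ∈ F, weight P σ :=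
        Finset.sum_le_sum fun σ _ => levelMass_selectsExtension_le hP f m [] σ
    _ = ∑ σ ∈ F, levelMass P m {l | σ <+: l} :=
        Finset.sum_congr rfl fun σ hσ => (levelMass_prefix hP (hfin.mem_toFinset.1 hσ).2.1).symm
    _ = levelMass P m (⋃ σ ∈ F, {l | σ <+: l}) := (levelMass_biUnion F m hdisj).symm
    _ ≤ levelMass P m (extensions S) := by
        refine levelMass_mono hP.1 fun l _ hl => ?_
        obtain ⟨σ, hσ, hσl⟩ := Set.mem_iUnion₂.1 hl
        exact ⟨σ, (hfin.mem_toFinset.1 hσ).1, hσl⟩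

lemma cylMeasure_selectPreimage_le (hP : IsFPS P) (f : List Ω →. Bool) (S : Set (List Ω)) :
    cylMeasure P (selectPreimage f S) ≤ cylMeasure P S := by
  rw [cylMeasure_eq_iSup_levelMass P (selectPreimage f S)]
  exact ciSup_le fun m =>
    (levelMass_selectPreimage_le hP f S m).trans (levelMass_le_cylMeasure hP m S)

end SelectionMeasure

section Sequences

variable {Ω : Type*} {f : List Ω →. Bool} {α : ℕ → Ω}

lemma seqPrefix_succ (α : ℕ → Ω) (k : ℕ) : seqPrefix α (k + 1) = seqPrefix α k ++ [α k] := by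
  rw [seqPrefix, List.ofFn_succ']
  simp [seqPrefix, List.concat_eq_append]

open Classical in
lemma select_seqPrefix (hdom : ∀ k, (f (seqPrefix α k)).Dom) (m : ℕ) :
    select f [] (seqPrefix α m) = Part.some (seqPrefix
      (fun k => α (Nat.nth (fun ℓ => true ∈ f (seqPrefix α ℓ)) k))
      (Nat.count (fun ℓ => true ∈ f (seqPrefix α ℓ)) m)) := by
  induction m with
  | zero => rfl
  | succ m ih =>
    rw [seqPrefix_succ, select_append, ih, List.nil_append, select_singleton,
      ← Part.some_get (hdom m), Nat.count_succ]
    cases hc : (f (seqPrefix α m)).get (hdom m)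
    · have : ¬ true ∈ f (seqPrefix α m) := by
        rw [← Part.some_get (hdom m), hc]
        simp
      simp [this]
    · have : true ∈ f (seqPrefix α m) := by
        rw [← Part.some_get (hdom m), hc]
        simp
      simp [this, seqPrefix_succ, Nat.nth_count (p := fun ℓ => true ∈ f (seqPrefix α ℓ)) this]

lemma inOpen_selectPreimage {S : Set (List Ω)} (hdom : ∀ k, (f (seqPrefix α k)).Dom)
    (hinf : {k | true ∈ f (seqPrefix α k)}.Infinite)
    (hβ : inOpen S fun k => α (Nat.nth (fun ℓ => true ∈ f (seqPrefix α ℓ)) k)) :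
    inOpen (selectPreimage f S) α := by
  obtain ⟨σ, hσS, hσ⟩ := hβ
  refine ⟨seqPrefix α (Nat.nth (fun ℓ => true ∈ f (seqPrefix α ℓ)) σ.length), ⟨σ, ?_, hσS⟩,
    by simp [seqPrefix]⟩
  classical
  rw [select_seqPrefix hdom, Nat.count_nth_of_infinite hinf, hσ]
  exact Part.mem_some σ

end Sequences

section Computability

lemma REPred.exists_mem_of_partrec {α β : Type*} [Primcodable α] [Primcodable β] {g : α →. β}
    {q : α × β → Prop} (hg : Partrec g) (hq : REPred q) :
    REPred fun a => ∃ b ∈ g a, q (a, b) :=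
  (hg.bind (Partrec.to₂ hq)).dom_re.of_eq fun a => by
    simp [Part.dom_iff_mem, Part.mem_bind_iff, Part.mem_assert_iff]

/-- Run through the positions `k < ρ.length`, appending `ρ[k]` when `g (ρ.take k) = true`. -/
lemma partrec_select {Γ : Type*} [Primcodable Γ] {g : List Γ →. Bool} (hg : Partrec g) :
    Partrec (select g []) := by
  let step : List Γ → ℕ × List Γ →. List Γ := fun ρ p =>
    (g (ρ.take p.1)).map fun c => cond c (p.2 ++ ρ[p.1]?.toList) p.2
  have hstep : Partrec₂ step := by
    refine Partrec.map
      (hg.comp (Primrec.list_take.comp (Primrec.fst.comp Primrec.snd) Primrec.fst).to_comp) ?_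
    exact (Primrec.cond Primrec.snd
      (Primrec.list_append.comp (Primrec.snd.comp (Primrec.snd.comp Primrec.fst))
        (Primrec.optionToList.comp (Primrec.list_getElem?.comp (Primrec.fst.comp Primrec.fst)
          (Primrec.fst.comp (Primrec.snd.comp Primrec.fst)))))
      (Primrec.snd.comp (Primrec.snd.comp Primrec.fst))).to_comp.to₂
  have hrec : ∀ ρ k, k ≤ ρ.length →
      Nat.rec (Part.some []) (fun y IH => IH.bind fun s => step ρ (y, s)) k =
        select g [] (ρ.take k) := by
    intro ρ k hk
    induction k with
    | zero => rfl
    | succ k ih =>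
      have hk' : k < ρ.length := hk
      show (Nat.rec _ _ k : Part (List Γ)).bind _ = _
      rw [ih hk'.le, List.take_add_one, List.getElem?_eq_getElem hk', Option.toList_some,
        select_append, List.nil_append, select_singleton]
      simp only [step, List.getElem?_eq_getElem hk', Option.toList_some, Part.map_map]
      congr 1
      funext s
      congr 1
      funext c
      cases c <;> simp
  exact (Partrec.nat_rec Computable.list_length (Partrec.const' _) hstep).of_eq fun ρ => by
    rw [hrec ρ ρ.length le_rfl, List.take_length]

variable {Ω : Type*} [Fintype Ω] {P : Ω → ℝ} {f : List Ω →. Bool} {C : Set (ℕ × List Ω)}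

def selectTest (f : List Ω →. Bool) (C : Set (ℕ × List Ω)) : Set (ℕ × List Ω) :=
  {q | q.2 ∈ selectPreimage f {σ | (q.1, σ) ∈ C}}

lemma REset.selectTest (e : Ω ≃ Fin (Fintype.card Ω))
    (hf : Partrec fun σ : List (Fin (Fintype.card Ω)) => f (σ.map e.symm)) (hC : REset C) :
    REset (selectTest f C) := by
  obtain ⟨e', hC'⟩ := hC
  have hq : REPred fun x : (ℕ × List (Fin (Fintype.card Ω))) × List (Fin (Fintype.card Ω)) =>
      (x.1.1, x.2.map e.symm) ∈ C := by
    have hcode : Primrec fun x : (ℕ × List (Fin (Fintype.card Ω))) × List (Fin (Fintype.card Ω)) =>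
        (x.1.1, x.2.map (e' ∘ e.symm)) :=
      Primrec.pair (Primrec.fst.comp Primrec.fst)
        (Primrec.list_map Primrec.snd ((Primrec.dom_finite _).comp Primrec.snd).to₂)
    have hq' : REPred fun x : (ℕ × List (Fin (Fintype.card Ω))) × List (Fin (Fintype.card Ω)) =>
        (x.1.1, (x.2.map (e' ∘ e.symm)).map e'.symm) ∈ C :=
      hC'.comp hcode.to_comp
    exact hq'.of_eq fun x => by simp [List.map_map, Function.comp_def]
  refine ⟨e, (REPred.exists_mem_of_partrec ((partrec_select hf).comp Computable.snd) hq).of_eq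
    fun p => ?_⟩
  have hmap := select_map (f := f) e.symm [] p.2
  rw [List.map_nil] at hmap
  show _ ↔ ∃ s ∈ select f [] (p.2.map e.symm), (p.1, s) ∈ C
  simp only [← hmap, Part.mem_map_iff]
  constructor
  · rintro ⟨t, ht, htC⟩
    exact ⟨_, ⟨t, ht, rfl⟩, htC⟩
  · rintro ⟨_, ⟨t, ht, rfl⟩, htC⟩
    exact ⟨t, ht, htC⟩

lemma MLTest.selectTest (hP : IsFPS P) (e : Ω ≃ Fin (Fintype.card Ω))
    (hf : Partrec fun σ : List (Fin (Fintype.card Ω)) => f (σ.map e.symm)) (hC : MLTest P C) :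
    MLTest P (selectTest f C) :=
  ⟨hC.1.selectTest e hf, fun n hn =>
    (cylMeasure_selectPreimage_le hP f {σ | (n, σ) ∈ C}).trans_lt (hC.2 n hn)⟩

end Computability

/-- Positions are indexed from `0`, so `seqPrefix α k` is the prefix of length `k` and the
element following this prefix is `α k`; `Nat.nth p k` is the `k`-th element (in increasing
order, counting from `0`) of the set of `ℓ` such that the selection function answers
YES (= `true`) on the prefix of length `ℓ`. -/
theorem closure_under_partial_computable_selection_general {Ω : Type*} [Fintype Ω]
    (P : Ω → ℝ) (hP : IsFPS P) (α : ℕ → Ω) (hα : MLRandom P α)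
    (f : List Ω →. Bool)
    (hcomp : ∃ e : Ω ≃ Fin (Fintype.card Ω),
      Partrec fun σ : List (Fin (Fintype.card Ω)) => f (σ.map e.symm))
    (hdom : ∀ k : ℕ, (f (seqPrefix α k)).Dom)
    (hinf : {k : ℕ | true ∈ f (seqPrefix α k)}.Infinite) :
    MLRandom P (fun k => α (Nat.nth (fun ℓ => true ∈ f (seqPrefix α ℓ)) k)) := by
  obtain ⟨e, hf⟩ := hcomp
  intro C hC
  obtain ⟨n, hn, hαn⟩ := hα _ (hC.selectTest hP e hf)
  exact ⟨n, hn, fun hβ => hαn (inOpen_selectPreimage hdom hinf hβ)⟩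

/-- closure under selection by a partial computable selection function.
Positions are indexed from `0`, so `seqPrefix α k` is the prefix of length `k` and the
element following this prefix is `α k`; `Nat.nth p k` is the `k`-th element (in increasing
order, counting from `0`) of the set of `ℓ` such that the selection function answers
YES (= `true`) on the prefix of length `ℓ`. -/
theorem closure_under_partial_computable_selection {Ω : Type*} [Fintype Ω] [Nonempty Ω]
    (P : Ω → ℝ) (hP : IsFPS P) (α : ℕ → Ω) (hα : MLRandom P α)
    (f : List Ω →. Bool)
    (hcomp : ∃ e : Ω ≃ Fin (Fintype.card Ω),
      Partrec fun σ : List (Fin (Fintype.card Ω)) => f (σ.map e.symm))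
    (hdom : ∀ k : ℕ, (f (seqPrefix α k)).Dom)
    (hinf : {k : ℕ | true ∈ f (seqPrefix α k)}.Infinite) :
    MLRandom P (fun k => α (Nat.nth (fun ℓ => true ∈ f (seqPrefix α ℓ)) k)) :=
  closure_under_partial_computable_selection_general P hP α hα f hcomp hdom hinf

end Paper
end

section
/- (Closure under the mapping by a random variable.) Let P be a finite probability space on an alphabet Ω, and let X : Ω → Ω' be a function to an alphabet Ω'. If α is a Martin-Löf P-random infinite sequence over Ω, then the infinite sequence X(α) over Ω' defined by (X(α))(k) = X(α(k)) for all k ∈ ℕ⁺ is Martin-Löf X(P)-random, where X(P) is the finite probability space on Ω' defined by (X(P))(x) = ∑_{a ∈ X^{-1}(x)} P(a). -/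
/-!
For a set `S'` of strings over `Ω'`, let `S` be the set of strings over `Ω` whose image under `X`
lies in `S'`. Then `X(α) ∈ [S']` iff `α ∈ [S]`, and `λ_P([S]) = λ_{X(P)}([S'])`: the `P`-weight of
the length-`n` strings over `Ω` mapped onto a fixed string `τ'` factors as the product of the fibre
masses `X(P)(τ' i)`. Since `X` is computable on finite alphabets, pulling back an `X(P)`-test
along `X` gives a `P`-test, which must miss `α` at some level; `X(α)` escapes the original test
there.
-/

open scoped BigOperators

namespace Paper

/-- The probability `P(A)` of an event `A ⊆ Ω`. -/
noncomputable def evP {Ω : Type*} [Fintype Ω] (P : Ω → ℝ) (A : Set Ω) : ℝ :=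
  ∑ x, A.indicator P x

theorem sum_indicator_preimage {ι κ M : Type*} [Fintype ι] [Fintype κ] [DecidableEq κ]
    [AddCommMonoid M] (g : ι → κ) (A : Set κ) (f : ι → M) :
    ∑ i, (g ⁻¹' A).indicator f i = ∑ k, A.indicator (fun k => ∑ i with g i = k, f i) k := by
  rw [← Finset.sum_fiberwise Finset.univ g]
  refine Finset.sum_congr rfl fun k _ => ?_
  by_cases hk : k ∈ A
  · rw [Set.indicator_of_mem hk]
    refine Finset.sum_congr rfl fun i hi => Set.indicator_of_mem ?_ f
    simpa [(Finset.mem_filter.mp hi).2] using hk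
  · rw [Set.indicator_of_notMem hk]
    refine Finset.sum_eq_zero fun i hi => Set.indicator_of_notMem ?_ f
    simpa [(Finset.mem_filter.mp hi).2] using hk

theorem REPred.comp {α β : Type*} [Primcodable α] [Primcodable β] {p : β → Prop} {f : α → β}
    (hp : REPred p) (hf : Computable f) : REPred fun a => p (f a) :=
  Partrec.comp hp hf

section Pushforward

variable {Ω Ω' : Type*}

theorem evP_preimage_singleton [Fintype Ω] [DecidableEq Ω'] (P : Ω → ℝ) (X : Ω → Ω') (x : Ω') :
    evP P {a | X a = x} = ∑ a with X a = x, P a := by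
  rw [evP, Finset.sum_indicator_eq_sum_filter]
  rfl

theorem sum_prod_of_comp_eq [Fintype Ω] [Fintype Ω'] [DecidableEq Ω'] (P : Ω → ℝ) (X : Ω → Ω')
    {n : ℕ} (τ' : Fin n → Ω') :
    ∑ τ : Fin n → Ω with X ∘ τ = τ', ∏ i, P (τ i) = ∏ i, evP P {a | X a = τ' i} := by
  simp_rw [evP_preimage_singleton, Finset.prod_univ_sum]
  refine Finset.sum_congr ?_ fun _ _ => rfl
  ext τ
  simp [Fintype.mem_piFinset, funext_iff]

theorem exists_prefix_mem_preimage_map_iff (X : Ω → Ω') (S : Set (List Ω')) (l : List Ω) :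
    (∃ σ : List Ω, σ.map X ∈ S ∧ σ <+: l) ↔ ∃ σ' ∈ S, σ' <+: l.map X := by
  constructor
  · rintro ⟨σ, hσ, hpre⟩
    exact ⟨σ.map X, hσ, hpre.map X⟩
  · rintro ⟨σ', hσ', hpre⟩
    obtain ⟨σ, hσl, rfl⟩ := List.prefix_map_iff.mp hpre
    exact ⟨σ, hσ', hσl⟩

theorem cylMeasure_preimage_map [Fintype Ω] [Fintype Ω'] (P : Ω → ℝ) (X : Ω → Ω')
    (S : Set (List Ω')) :
    cylMeasure P {σ | σ.map X ∈ S} = cylMeasure (fun x => evP P {a | X a = x}) S := by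
  classical
  refine iSup_congr fun n => ?_
  have hpre : {τ : Fin n → Ω | ∃ σ ∈ {σ | σ.map X ∈ S}, σ <+: List.ofFn τ}
      = (X ∘ ·) ⁻¹' {τ' | ∃ σ' ∈ S, σ' <+: List.ofFn τ'} := by
    ext τ
    simp only [Set.mem_ofPred_eq, Set.mem_preimage, exists_prefix_mem_preimage_map_iff,
      ← List.map_ofFn]
  rw [hpre, sum_indicator_preimage]
  simp_rw [sum_prod_of_comp_eq]

theorem REset.preimage_map [Fintype Ω] [Fintype Ω'] (X : Ω → Ω') {C : Set (ℕ × List Ω')}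
    (hC : REset C) : REset {p : ℕ × List Ω | (p.1, p.2.map X) ∈ C} := by
  obtain ⟨e', hC⟩ := hC
  obtain ⟨e⟩ : Nonempty (Ω ≃ Fin (Fintype.card Ω)) := ⟨Fintype.equivFin Ω⟩
  refine ⟨e, ?_⟩
  have hrecode : Computable fun p : ℕ × List (Fin (Fintype.card Ω)) =>
      (p.1, p.2.map fun i => e' (X (e.symm i))) :=
    (Primrec.fst.pair (Primrec.list_map Primrec.snd
      ((Primrec.dom_finite fun i => e' (X (e.symm i))).comp Primrec.snd).to₂)).to_comp
  refine (REPred.comp hC hrecode).of_eq fun p => ?_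
  simp [Function.comp_def]

theorem MLTest.preimage_map [Fintype Ω] [Fintype Ω'] {P : Ω → ℝ} (X : Ω → Ω')
    {C : Set (ℕ × List Ω')} (hC : MLTest (fun x => evP P {a | X a = x}) C) :
    MLTest P {p : ℕ × List Ω | (p.1, p.2.map X) ∈ C} :=
  ⟨hC.1.preimage_map X, fun n hn =>
    (cylMeasure_preimage_map P X {σ | (n, σ) ∈ C}).trans_lt (hC.2 n hn)⟩

theorem seqPrefix_map (X : Ω → Ω') (α : ℕ → Ω) (n : ℕ) :
    seqPrefix (fun k => X (α k)) n = (seqPrefix α n).map X := by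
  simp [seqPrefix, List.map_ofFn, Function.comp_def]

theorem inOpen_preimage_map_iff (X : Ω → Ω') (S : Set (List Ω')) (α : ℕ → Ω) :
    inOpen {σ | σ.map X ∈ S} α ↔ inOpen S fun k => X (α k) := by
  constructor
  · rintro ⟨σ, hσ, hα⟩
    exact ⟨σ.map X, hσ, by rw [List.length_map, seqPrefix_map, hα]⟩
  · rintro ⟨σ', hσ', hα⟩
    refine ⟨seqPrefix α σ'.length, ?_, by simp [seqPrefix]⟩
    rwa [Set.mem_ofPred_eq, ← seqPrefix_map, hα]

end Pushforward

theorem closure_under_random_variable_general {Ω Ω' : Type*} [Fintype Ω]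
    [Fintype Ω']
    (P : Ω → ℝ) (X : Ω → Ω') (α : ℕ → Ω) (hα : MLRandom P α) :
    MLRandom (fun x : Ω' => evP P {a : Ω | X a = x}) (fun k => X (α k)) := by
  intro C hC
  obtain ⟨n, hn, hαn⟩ := hα _ (hC.preimage_map X)
  exact ⟨n, hn, fun hXα => hαn ((inOpen_preimage_map_iff X _ α).mpr hXα)⟩

/-- closure under the mapping by a random variable.
If `α` is Martin-Löf `P`-random and `X : Ω → Ω'` is a random variable, then `X(α)` is
Martin-Löf `X(P)`-random, where `(X(P))(x) = ∑_{a ∈ X⁻¹(x)} P(a)`. -/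
theorem closure_under_random_variable {Ω Ω' : Type*} [Fintype Ω] [Nonempty Ω]
    [Fintype Ω'] [Nonempty Ω']
    (P : Ω → ℝ) (hP : IsFPS P) (X : Ω → Ω') (α : ℕ → Ω) (hα : MLRandom P α) :
    MLRandom (fun x : Ω' => evP P {a : Ω | X a = x}) (fun k => X (α k)) :=
  closure_under_random_variable_general P X α hα

end Paper
end
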